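/- For all z ∈ ℝ, 0 < ψ(z) < 1, where ψ(z) = (φ(z)/Φ(z))·(z + φ(z)/Φ(z)). -/

import Mathlib

open MeasureTheory Filter

noncomputable def phi (z : ℝ) : ℝ := (Real.sqrt (2 * Real.pi))⁻¹ * Real.exp (-z ^ 2 / 2)
noncomputable def Phi (z : ℝ) : ℝ := ∫ t in Set.Iic z, phi t
noncomputable def psi (z : ℝ) : ℝ := (phi z / Phi z) * (z + phi z / Phi z)

section Aux
open Real Set

lemma phi_pos (z : ℝ) : 0 < phi z := by
  unfold phi
  positivity

lemma hasDerivAt_phi (z : ℝ) : HasDerivAt phi (-z * phi z) z := by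
  have h : HasDerivAt (fun t : ℝ => (Real.sqrt (2 * Real.pi))⁻¹ * Real.exp (-t ^ 2 / 2))
      ((Real.sqrt (2 * Real.pi))⁻¹ * (Real.exp (-z ^ 2 / 2) * (-(2*z)/2))) z := by
    have h1 : HasDerivAt (fun t : ℝ => -t ^ 2 / 2) (-(2*z)/2) z := by
      simpa using ((hasDerivAt_pow 2 z).neg.div_const 2)
    exact (h1.exp.const_mul _)
  convert h using 1
  unfold phi; ring
  unfold phi; ring

lemma integrable_aux {f : ℝ → ℝ} (hc : Continuous f) (C : ℝ)
    (h : ∀ t, |f t| ≤ C * Real.exp (-(1/4) * t ^ 2)) : Integrable f := by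
  refine ((integrable_exp_neg_mul_sq (by norm_num : (0:ℝ) < 1/4)).const_mul C).mono'
    hc.aestronglyMeasurable (ae_of_all _ fun t => ?_)
  rw [Real.norm_eq_abs]
  exact h t

lemma exp_bound_sq (t : ℝ) : t ^ 2 ≤ 4 * Real.exp ((1/4) * t ^ 2) := by
  have h := Real.add_one_le_exp ((1/4) * t ^ 2)
  nlinarith [Real.exp_pos ((1/4) * t ^ 2)]

lemma sqrt_inv_le_one : (Real.sqrt (2 * Real.pi))⁻¹ ≤ 1 := by
  rw [inv_le_one_iff₀]
  right
  rw [show (1:ℝ) = Real.sqrt 1 by simp]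
  apply Real.sqrt_le_sqrt
  nlinarith [Real.pi_gt_three]

lemma phi_le (t : ℝ) : phi t ≤ Real.exp (-t ^ 2 / 2) := by
  have h := sqrt_inv_le_one
  unfold phi
  nlinarith [Real.exp_pos (-t^2/2)]

lemma abs_t_le (t : ℝ) : |t| ≤ 3 * Real.exp ((1/4) * t ^ 2) := by
  have h2 := exp_bound_sq t
  have he1 : (1:ℝ) ≤ Real.exp ((1/4) * t ^ 2) := Real.one_le_exp (by positivity)
  rw [abs_le]
  constructor <;> nlinarith [sq_nonneg t, Real.exp_pos ((1/4)*t^2)]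

lemma exp_key (t : ℝ) : Real.exp ((1/4) * t ^ 2) * Real.exp (-t ^ 2 / 2) = Real.exp (-(1/4) * t ^ 2) := by
  rw [← Real.exp_add]; congr 1; ring

lemma abs_one_mul_phi (t : ℝ) : |t * phi t| ≤ 3 * Real.exp (-(1/4) * t ^ 2) := by
  have hp0 := phi_pos t
  calc |t * phi t| = |t| * phi t := by rw [abs_mul, abs_of_nonneg hp0.le]
    _ ≤ (3 * Real.exp ((1/4) * t ^ 2)) * Real.exp (-t^2/2) :=
        mul_le_mul (abs_t_le t) (phi_le t) hp0.le (by positivity)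
    _ = 3 * Real.exp (-(1/4) * t^2) := by rw [mul_assoc, exp_key]

lemma abs_sq_mul_phi (t : ℝ) : |t ^ 2 * phi t| ≤ 4 * Real.exp (-(1/4) * t ^ 2) := by
  have hp0 := phi_pos t
  calc |t ^ 2 * phi t| = t ^ 2 * phi t := abs_of_nonneg (by positivity)
    _ ≤ (4 * Real.exp ((1/4) * t ^ 2)) * Real.exp (-t^2/2) :=
        mul_le_mul (exp_bound_sq t) (phi_le t) hp0.le (by positivity)
    _ = 4 * Real.exp (-(1/4) * t^2) := by rw [mul_assoc, exp_key]

lemma abs_phi (t : ℝ) : |phi t| ≤ 1 * Real.exp (-(1/4) * t ^ 2) := by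
  have hp0 := phi_pos t
  have he1 : (1:ℝ) ≤ Real.exp ((1/4) * t ^ 2) := Real.one_le_exp (by positivity)
  calc |phi t| = phi t := abs_of_nonneg hp0.le
    _ ≤ (1 * Real.exp ((1/4) * t ^ 2)) * Real.exp (-t^2/2) := by
        rw [one_mul]
        calc phi t ≤ Real.exp (-t^2/2) := phi_le t
          _ = 1 * Real.exp (-t^2/2) := (one_mul _).symm
          _ ≤ Real.exp ((1/4) * t ^ 2) * Real.exp (-t^2/2) :=
              mul_le_mul_of_nonneg_right he1 (Real.exp_pos _).le
    _ = 1 * Real.exp (-(1/4) * t^2) := by rw [mul_assoc, exp_key]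

lemma integrable_phi : Integrable phi := by
  refine integrable_aux ?_ 1 abs_phi
  unfold phi
  continuity

lemma integrable_mul_phi : Integrable (fun t : ℝ => t * phi t) := by
  refine integrable_aux ?_ 3 abs_one_mul_phi
  unfold phi
  continuity

lemma integrable_sq_mul_phi : Integrable (fun t : ℝ => t ^ 2 * phi t) := by
  refine integrable_aux ?_ 4 abs_sq_mul_phi
  unfold phi
  continuity

lemma tendsto_exp_quarter : Tendsto (fun t : ℝ => Real.exp (-(1/4) * t ^ 2)) atBot (nhds 0) := by
  apply Real.tendsto_exp_atBot.comp
  have h : Tendsto (fun t : ℝ => t ^ 2) atBot atTop := by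
    have h1 : Tendsto (fun t : ℝ => -t) atBot atTop := tendsto_neg_atBot_atTop
    have := (tendsto_pow_atTop (two_ne_zero)).comp h1
    refine this.congr fun t => ?_
    simp [Function.comp]
  have h2 := h.const_mul_atTop (show (0:ℝ) < 1/4 by norm_num)
  have h3 : Tendsto (fun t : ℝ => -(1/4 * t ^ 2)) atBot atBot := tendsto_neg_atTop_atBot.comp h2
  refine h3.congr fun t => by ring

lemma tendsto_const_exp (C : ℝ) : Tendsto (fun t : ℝ => C * Real.exp (-(1/4) * t ^ 2)) atBot (nhds 0) := by
  rw [show (0:ℝ) = C * 0 by ring]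
  exact tendsto_exp_quarter.const_mul C

lemma tendsto_phi_atBot : Tendsto phi atBot (nhds 0) :=
  squeeze_zero_norm abs_phi (tendsto_const_exp 1)

lemma tendsto_mul_phi_atBot : Tendsto (fun t : ℝ => t * phi t) atBot (nhds 0) :=
  squeeze_zero_norm abs_one_mul_phi (tendsto_const_exp 3)

lemma I1 (z : ℝ) : ∫ t in Set.Iic z, t * phi t = -phi z := by
  have h : ∫ t in Set.Iic z, -(t * phi t) = phi z - 0 := by
    refine integral_Iic_of_hasDerivAt_of_tendsto' (f := phi)
      (fun x _ => by simpa [neg_mul] using hasDerivAt_phi x)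
      (integrable_mul_phi.neg.integrableOn) tendsto_phi_atBot
  rw [integral_neg] at h
  linarith

lemma I2 (z : ℝ) : ∫ t in Set.Iic z, t ^ 2 * phi t = Phi z - z * phi z := by
  have hderiv : ∀ x : ℝ, HasDerivAt (fun t : ℝ => -t * phi t)
      (x ^ 2 * phi x - phi x) x := by
    intro x
    have h1 : HasDerivAt (fun t : ℝ => -t) (-1) x := (hasDerivAt_id x).neg
    have := h1.mul (hasDerivAt_phi x)
    exact this.congr_deriv (by ring)
  have hint : IntegrableOn (fun t : ℝ => t ^ 2 * phi t - phi t) (Set.Iic z) :=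
    (integrable_sq_mul_phi.sub integrable_phi).integrableOn
  have htend : Tendsto (fun t : ℝ => -t * phi t) atBot (nhds 0) := by
    have := tendsto_mul_phi_atBot.neg
    simpa [neg_mul] using this
  have h : ∫ t in Set.Iic z, (t ^ 2 * phi t - phi t) = -z * phi z - 0 :=
    integral_Iic_of_hasDerivAt_of_tendsto' (fun x _ => hderiv x) hint htend
  rw [integral_sub integrable_sq_mul_phi.integrableOn integrable_phi.integrableOn] at h
  have : Phi z = ∫ t in Set.Iic z, phi t := rfl
  linarith

lemma setIntegral_pos_aux {f : ℝ → ℝ} (z : ℝ) (hnn : ∀ t ∈ Set.Iic z, 0 ≤ f t)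
    (hfi : IntegrableOn f (Set.Iic z)) (w : ℝ) (hw : Set.Iio w ∩ Set.Iic z ⊆ Function.support f) :
    0 < ∫ t in Set.Iic z, f t := by
  have hae : 0 ≤ᵐ[volume.restrict (Set.Iic z)] f := by
    filter_upwards [ae_restrict_mem measurableSet_Iic] with t ht using hnn t ht
  rw [setIntegral_pos_iff_support_of_nonneg_ae hae hfi]
  have hsub : Set.Iio (min w z) ⊆ Function.support f ∩ Set.Iic z := by
    intro x hx
    rw [Set.mem_Iio, lt_min_iff] at hx
    exact ⟨hw ⟨hx.1, hx.2.le⟩, hx.2.le⟩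
  calc (0 : ENNReal) < volume (Set.Iio (min w z)) := by rw [Real.volume_Iio]; exact ENNReal.zero_lt_top
    _ ≤ volume (Function.support f ∩ Set.Iic z) := measure_mono hsub

lemma Phi_pos (z : ℝ) : 0 < Phi z := by
  refine setIntegral_pos_aux z (fun t _ => (phi_pos t).le) integrable_phi.integrableOn z ?_
  intro x _
  exact (phi_pos x).ne'

lemma key1 (z : ℝ) : 0 < z * Phi z + phi z := by
  have h : ∫ t in Set.Iic z, (z - t) * phi t = z * Phi z + phi z := by
    have : ∀ t : ℝ, (z - t) * phi t = z * phi t - t * phi t := fun t => by ring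
    rw [integral_congr_ae (ae_of_all _ fun t => this t),
      integral_sub (integrable_phi.integrableOn.const_mul z) integrable_mul_phi.integrableOn,
      MeasureTheory.integral_const_mul, I1]
    have : Phi z = ∫ t in Set.Iic z, phi t := rfl
    rw [← this]; ring
  rw [← h]
  have hint : IntegrableOn (fun t : ℝ => (z - t) * phi t) (Set.Iic z) := by
    have he : (fun t : ℝ => (z - t) * phi t) = fun t : ℝ => z * phi t - t * phi t := by
      funext t; ring
    rw [he]
    exact ((integrable_phi.const_mul z).sub integrable_mul_phi).integrableOn
  refine setIntegral_pos_aux z (fun t ht => ?_) hint z ?_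
  · rw [Set.mem_Iic] at ht
    exact mul_nonneg (by linarith) (phi_pos t).le
  · intro x hx
    have hx1 := hx.1
    rw [Set.mem_Iio] at hx1
    simp only [Function.mem_support]
    exact mul_ne_zero (by linarith) (phi_pos x).ne'

lemma key2 (z : ℝ) : phi z * (z * Phi z + phi z) < Phi z ^ 2 := by
  set P := Phi z with hP
  set p := phi z with hp
  have hP0 : 0 < P := Phi_pos z
  have hexp : (fun t : ℝ => (P * t + p) ^ 2 * phi t)
      = fun t : ℝ => P ^ 2 * (t ^ 2 * phi t) + (2 * P * p) * (t * phi t) + p ^ 2 * phi t := by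
    funext t; ring
  have hint : IntegrableOn (fun t : ℝ => (P * t + p) ^ 2 * phi t) (Set.Iic z) := by
    rw [hexp]
    exact (((integrable_sq_mul_phi.const_mul _).add (integrable_mul_phi.const_mul _)).add
      (integrable_phi.const_mul _)).integrableOn
  have hval : ∫ t in Set.Iic z, (P * t + p) ^ 2 * phi t = P * (P ^ 2 - z * p * P - p ^ 2) := by
    have h1 : IntegrableOn (fun t : ℝ => P ^ 2 * (t ^ 2 * phi t) + (2 * P * p) * (t * phi t))
        (Set.Iic z) := by
      exact ((integrable_sq_mul_phi.const_mul _).add (integrable_mul_phi.const_mul _)).integrableOn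
    have h2 : IntegrableOn (fun t : ℝ => p ^ 2 * phi t) (Set.Iic z) :=
      (integrable_phi.const_mul _).integrableOn
    have h3 : IntegrableOn (fun t : ℝ => P ^ 2 * (t ^ 2 * phi t)) (Set.Iic z) :=
      (integrable_sq_mul_phi.const_mul _).integrableOn
    have h4 : IntegrableOn (fun t : ℝ => (2 * P * p) * (t * phi t)) (Set.Iic z) :=
      (integrable_mul_phi.const_mul _).integrableOn
    rw [hexp]
    rw [integral_add h1 h2, integral_add h3 h4,
      MeasureTheory.integral_const_mul, MeasureTheory.integral_const_mul,
      MeasureTheory.integral_const_mul, I1, I2]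
    have hPhi : (∫ t in Set.Iic z, phi t) = P := rfl
    rw [hPhi, ← hP, ← hp]
    ring
  have hpos : 0 < ∫ t in Set.Iic z, (P * t + p) ^ 2 * phi t := by
    refine setIntegral_pos_aux z (fun t _ => mul_nonneg (sq_nonneg _) (phi_pos t).le) hint
      (-p / P) ?_
    intro x hx
    have hx1 := hx.1
    rw [Set.mem_Iio] at hx1
    have hx2 : x * P < -p := by rwa [lt_div_iff₀ hP0] at hx1
    simp only [Function.mem_support]
    refine mul_ne_zero (pow_ne_zero _ ?_) (phi_pos x).ne'
    nlinarith
  rw [hval] at hpos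
  nlinarith

end Aux

theorem stmt4 : ∀ z : ℝ, 0 < psi z ∧ psi z < 1 := by
  intro z
  have hP : 0 < Phi z := Phi_pos z
  have hp : 0 < phi z := phi_pos z
  have h1 : 0 < z * Phi z + phi z := key1 z
  have h2 : phi z * (z * Phi z + phi z) < Phi z ^ 2 := key2 z
  have hrep : psi z = phi z * (z * Phi z + phi z) / Phi z ^ 2 := by
    unfold psi
    field_simp
  constructor
  · rw [hrep]
    exact div_pos (mul_pos hp h1) (by positivity)
  · rw [hrep]
    exact (div_lt_one (by positivity)).mpr h2
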